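/- For v ∈ R^3 with 0 < |v| < 1 and W₁, W₂: R^3 → R with |W_i(x)| ≤ C⟨x⟩^{−1}, the term F(x,t) = 10W₁³(x)W₂²(x−vt) + 10W₁²(x)W₂³(x−vt) belongs to L^1_t([1,∞); L^2_x(R^3)), and ∫_{t₁}^∞ ‖F(·,t)‖_{L^2(R^3)} dt ≤ C t₁^{−1/2} for t₁ ≥ 1. -/

import Mathlib

open MeasureTheory

noncomputable section

abbrev E3 := EuclideanSpace ℝ (Fin 3)

def jb (y : E3) : ℝ := Real.sqrt (1 + ‖y‖ ^ 2)

/-- The balanced interaction term `F(x,t) = 10W₁³(x)W₂²(x−vt) + 10W₁²(x)W₂³(x−vt)`. -/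
def Fterm (v : E3) (W₁ W₂ : E3 → ℝ) (x : E3) (t : ℝ) : ℝ :=
  10 * W₁ x ^ 3 * W₂ (x - t • v) ^ 2 + 10 * W₁ x ^ 2 * W₂ (x - t • v) ^ 3

/-!
For `t ≥ 1` the two profiles are centred a distance `t‖v‖` apart, so at every point `x` one of
`⟨x⟩⁻¹`, `⟨x - tv⟩⁻¹` is at most `2 / (t‖v‖)`. Since each term of `F` contains both profiles
squared, this gives `|F(x,t)| ≲ C⁵ (t‖v‖)⁻² (⟨x⟩⁻² + ⟨x - tv⟩⁻²)`, and `⟨x⟩⁻²` lies in `L²(ℝ³)`.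
Hence `‖F(·,t)‖_{L²} ≲ t⁻²`, whose integral over `[t₁, ∞)` is `≲ t₁⁻¹ ≤ t₁^{-1/2}`.
-/

lemma norm_le_jb (y : E3) : ‖y‖ ≤ jb y :=
  Real.le_sqrt_of_sq_le (by linarith)

lemma one_le_jb (y : E3) : 1 ≤ jb y :=
  Real.le_sqrt_of_sq_le (by simp)

lemma jb_pos (y : E3) : 0 < jb y :=
  one_pos.trans_le (one_le_jb y)

lemma inv_jb_nonneg (y : E3) : 0 ≤ (jb y)⁻¹ :=
  inv_nonneg.2 (jb_pos y).le

lemma inv_jb_le_one (y : E3) : (jb y)⁻¹ ≤ 1 :=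
  inv_le_one_of_one_le₀ (one_le_jb y)

lemma continuous_jb : Continuous jb := by
  unfold jb; fun_prop

lemma nonneg_of_abs_le_mul_inv_jb {W : E3 → ℝ} {C : ℝ} (hW : ∀ x, |W x| ≤ C * (jb x)⁻¹) :
    0 ≤ C :=
  nonneg_of_mul_nonneg_left ((abs_nonneg _).trans (hW 0)) (inv_pos.2 (jb_pos 0))

lemma memLp_two_inv_jb_sq : MemLp (fun y : E3 => (jb y)⁻¹ ^ 2) 2 volume := by
  have hmeas : AEStronglyMeasurable (fun y : E3 => (jb y)⁻¹ ^ 2) volume :=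
    ((continuous_jb.inv₀ fun y => (jb_pos y).ne').pow 2).aestronglyMeasurable
  refine (memLp_two_iff_integrable_sq hmeas).2 <|
    (integrable_rpow_neg_one_add_norm_sq (E := E3) (μ := volume) (r := 4) (by simp; norm_num)).congr
      (Filter.Eventually.of_forall fun y => ?_)
  have h1 : (0 : ℝ) ≤ 1 + ‖y‖ ^ 2 := by positivity
  simp only [jb]
  rw [show -(4 : ℝ) / 2 = -((2 : ℕ) : ℝ) by norm_num, Real.rpow_neg h1, Real.rpow_natCast,
    inv_pow, inv_pow, ← pow_mul, pow_mul, Real.sq_sqrt h1]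

lemma inv_jb_le_or_inv_jb_sub_le (x w : E3) (hw : 0 < ‖w‖) :
    (jb x)⁻¹ ≤ 2 / ‖w‖ ∨ (jb (x - w))⁻¹ ≤ 2 / ‖w‖ := by
  have htri : ‖w‖ ≤ ‖x‖ + ‖x - w‖ := by
    simpa using norm_sub_le x (x - w)
  rw [← inv_div]
  by_contra! h
  have h₁ := (inv_lt_inv₀ (by positivity) (jb_pos x)).1 h.1
  have h₂ := (inv_lt_inv₀ (by positivity) (jb_pos (x - w))).1 h.2
  linarith [norm_le_jb x, norm_le_jb (x - w)]

lemma sq_mul_sq_le_of_le_or_le {a b r : ℝ} (ha : 0 ≤ a) (hb : 0 ≤ b) (h : a ≤ r ∨ b ≤ r) :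
    a ^ 2 * b ^ 2 ≤ r ^ 2 * (a ^ 2 + b ^ 2) := by
  rcases h with h | h
  · calc a ^ 2 * b ^ 2 ≤ r ^ 2 * b ^ 2 := by gcongr
      _ ≤ r ^ 2 * (a ^ 2 + b ^ 2) := by nlinarith [sq_nonneg r, sq_nonneg a]
  · calc a ^ 2 * b ^ 2 ≤ a ^ 2 * r ^ 2 := by gcongr
      _ ≤ r ^ 2 * (a ^ 2 + b ^ 2) := by nlinarith [sq_nonneg r, sq_nonneg b]

lemma cube_mul_sq_add_sq_mul_cube_le {a b r : ℝ} (ha₀ : 0 ≤ a) (ha₁ : a ≤ 1) (hb₀ : 0 ≤ b)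
    (hb₁ : b ≤ 1) (h : a ≤ r ∨ b ≤ r) :
    a ^ 3 * b ^ 2 + a ^ 2 * b ^ 3 ≤ 2 * r ^ 2 * (a ^ 2 + b ^ 2) :=
  calc a ^ 3 * b ^ 2 + a ^ 2 * b ^ 3 = a ^ 2 * b ^ 2 * (a + b) := by ring
    _ ≤ r ^ 2 * (a ^ 2 + b ^ 2) * 2 :=
        mul_le_mul (sq_mul_sq_le_of_le_or_le ha₀ hb₀ h) (by linarith) (by positivity)
          (by nlinarith [sq_nonneg r, sq_nonneg a, sq_nonneg b])
    _ = 2 * r ^ 2 * (a ^ 2 + b ^ 2) := by ring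

lemma abs_Fterm_le {v : E3} (hv : 0 < ‖v‖) {W₁ W₂ : E3 → ℝ} {C : ℝ}
    (hW₁ : ∀ x, |W₁ x| ≤ C * (jb x)⁻¹) (hW₂ : ∀ x, |W₂ x| ≤ C * (jb x)⁻¹) {t : ℝ} (ht : 0 < t)
    (x : E3) :
    |Fterm v W₁ W₂ x t| ≤
      20 * C ^ 5 * (2 / (t * ‖v‖)) ^ 2 * ((jb x)⁻¹ ^ 2 + (jb (x - t • v))⁻¹ ^ 2) := by
  have hC := nonneg_of_abs_le_mul_inv_jb hW₁
  have htv : ‖t • v‖ = t * ‖v‖ := by rw [norm_smul, Real.norm_of_nonneg ht.le]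
  have hfar := inv_jb_le_or_inv_jb_sub_le x (t • v) (htv ▸ mul_pos ht hv)
  rw [htv] at hfar
  set a := (jb x)⁻¹
  set b := (jb (x - t • v))⁻¹
  calc |Fterm v W₁ W₂ x t|
      ≤ 10 * |W₁ x| ^ 3 * |W₂ (x - t • v)| ^ 2 + 10 * |W₁ x| ^ 2 * |W₂ (x - t • v)| ^ 3 := by
        refine (abs_add_le _ _).trans_eq ?_
        simp only [abs_mul, abs_pow, abs_of_pos (by norm_num : (0 : ℝ) < 10)]
    _ ≤ 10 * (C * a) ^ 3 * (C * b) ^ 2 + 10 * (C * a) ^ 2 * (C * b) ^ 3 := by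
        have hCa : 0 ≤ C * a := mul_nonneg hC (inv_jb_nonneg x)
        gcongr <;> first | exact hW₁ x | exact hW₂ _
    _ = 10 * C ^ 5 * (a ^ 3 * b ^ 2 + a ^ 2 * b ^ 3) := by ring
    _ ≤ 10 * C ^ 5 * (2 * (2 / (t * ‖v‖)) ^ 2 * (a ^ 2 + b ^ 2)) := by
        gcongr
        exact cube_mul_sq_add_sq_mul_cube_le (inv_jb_nonneg _) (inv_jb_le_one _)
          (inv_jb_nonneg _) (inv_jb_le_one _) hfar
    _ = 20 * C ^ 5 * (2 / (t * ‖v‖)) ^ 2 * (a ^ 2 + b ^ 2) := by ring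

section Translate

variable {G : Type*} [AddGroup G] [MeasurableSpace G] [MeasurableAdd G] {μ : Measure G}
  [μ.IsAddRightInvariant]

lemma eLpNorm_le_of_abs_le_mul_add_translate {f g : G → ℝ} {c : ℝ} {w : G} {p : ENNReal}
    (hp : 1 ≤ p) (hg : AEStronglyMeasurable g μ) (hc : 0 ≤ c)
    (hfg : ∀ x, |f x| ≤ c * (g x + g (x - w))) :
    eLpNorm f p μ ≤ ENNReal.ofReal c * (2 * eLpNorm g p μ) := by
  have hshift : MeasurePreserving (fun x => x - w) μ μ := measurePreserving_sub_right μ w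
  have hsum : eLpNorm (fun x => g x + g (x - w)) p μ ≤ 2 * eLpNorm g p μ :=
    calc eLpNorm (fun x => g x + g (x - w)) p μ
        ≤ eLpNorm g p μ + eLpNorm (g ∘ fun x => x - w) p μ :=
          eLpNorm_add_le hg (hg.comp_measurePreserving hshift) hp
      _ = 2 * eLpNorm g p μ := by
          rw [eLpNorm_comp_measurePreserving hg hshift, two_mul]
  refine (eLpNorm_le_mul_eLpNorm_of_ae_le_mul (Filter.Eventually.of_forall fun x => ?_) p).trans
    (by gcongr)
  rw [Real.norm_eq_abs, Real.norm_eq_abs]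
  exact (hfg x).trans (mul_le_mul_of_nonneg_left (le_abs_self _) hc)

end Translate

lemma lintegral_Ici_le_of_le_mul_rpow {f : ℝ → ENNReal} {B s t₁ : ℝ} (hs : s < -1)
    (ht₁ : 0 < t₁) (hB : 0 ≤ B) (hf : ∀ t, t₁ ≤ t → f t ≤ ENNReal.ofReal (B * t ^ s)) :
    ∫⁻ t in Set.Ici t₁, f t ≤ ENNReal.ofReal (B * (-t₁ ^ (s + 1) / (s + 1))) :=
  calc ∫⁻ t in Set.Ici t₁, f t
      ≤ ∫⁻ t in Set.Ici t₁, ENNReal.ofReal (B * t ^ s) :=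
        setLIntegral_mono' measurableSet_Ici hf
    _ = ∫⁻ t in Set.Ioi t₁, ENNReal.ofReal (B * t ^ s) :=
        setLIntegral_congr Ioi_ae_eq_Ici.symm
    _ = ENNReal.ofReal (∫ t in Set.Ioi t₁, B * t ^ s) :=
        (ofReal_integral_eq_lintegral_ofReal ((integrableOn_Ioi_rpow_of_lt hs ht₁).const_mul B)
          ((ae_restrict_mem measurableSet_Ioi).mono fun t ht =>
            mul_nonneg hB (Real.rpow_nonneg (ht₁.trans ht).le s))).symm
    _ = ENNReal.ofReal (B * (-t₁ ^ (s + 1) / (s + 1))) := by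
        rw [integral_const_mul, integral_Ioi_rpow_of_lt hs ht₁]

lemma eLpNorm_Fterm_le {v : E3} (hv : 0 < ‖v‖) {W₁ W₂ : E3 → ℝ} {C : ℝ}
    (hW₁ : ∀ x, |W₁ x| ≤ C * (jb x)⁻¹) (hW₂ : ∀ x, |W₂ x| ≤ C * (jb x)⁻¹) {t : ℝ} (ht : 0 < t) :
    eLpNorm (fun x => Fterm v W₁ W₂ x t) 2 volume ≤
      ENNReal.ofReal (160 * C ^ 5 / ‖v‖ ^ 2 *
        (eLpNorm (fun y : E3 => (jb y)⁻¹ ^ 2) 2 volume).toReal * t ^ (-2 : ℝ)) := by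
  have hC := nonneg_of_abs_le_mul_inv_jb hW₁
  have hN := memLp_two_inv_jb_sq.eLpNorm_lt_top.ne
  refine (eLpNorm_le_of_abs_le_mul_add_translate one_le_two
    memLp_two_inv_jb_sq.aestronglyMeasurable (by positivity) (abs_Fterm_le hv hW₁ hW₂ ht)).trans_eq ?_
  have hN' : 2 * eLpNorm (fun y : E3 => (jb y)⁻¹ ^ 2) 2 volume =
      ENNReal.ofReal (2 * (eLpNorm (fun y : E3 => (jb y)⁻¹ ^ 2) 2 volume).toReal) := by
    rw [ENNReal.ofReal_mul zero_le_two, ENNReal.ofReal_toReal hN, ENNReal.ofReal_ofNat]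
  rw [hN', ← ENNReal.ofReal_mul (by positivity)]
  congr 1
  rw [Real.rpow_neg ht.le, Real.rpow_two]
  field_simp
  ring

theorem stmt18_general (v : E3) (hv0 : 0 < ‖v‖)
    (W₁ W₂ : E3 → ℝ) (C : ℝ)
    (hW₁ : ∀ x : E3, |W₁ x| ≤ C * (jb x)⁻¹) (hW₂ : ∀ x : E3, |W₂ x| ≤ C * (jb x)⁻¹) :
    (∫⁻ t in Set.Ici (1 : ℝ),
        eLpNorm (fun x : E3 => Fterm v W₁ W₂ x t) 2 volume) < ⊤ ∧
    ∃ C' : ℝ, 0 < C' ∧ ∀ t₁ : ℝ, 1 ≤ t₁ →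
      (∫⁻ t in Set.Ici t₁, eLpNorm (fun x : E3 => Fterm v W₁ W₂ x t) 2 volume)
        ≤ ENNReal.ofReal (C' * t₁ ^ (-(1 : ℝ) / 2)) := by
  set B := 160 * C ^ 5 / ‖v‖ ^ 2 * (eLpNorm (fun y : E3 => (jb y)⁻¹ ^ 2) 2 volume).toReal
  have hB : 0 ≤ B := by
    have := nonneg_of_abs_le_mul_inv_jb hW₁
    positivity
  have htail : ∀ t₁ : ℝ, 1 ≤ t₁ →
      (∫⁻ t in Set.Ici t₁, eLpNorm (fun x : E3 => Fterm v W₁ W₂ x t) 2 volume)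
        ≤ ENNReal.ofReal (B * t₁ ^ (-1 : ℝ)) := fun t₁ ht₁ => by
    have ht₁' : 0 < t₁ := one_pos.trans_le ht₁
    convert lintegral_Ici_le_of_le_mul_rpow (by norm_num) ht₁' hB
      fun t ht => eLpNorm_Fterm_le hv0 hW₁ hW₂ (ht₁'.trans_le ht) using 3
    norm_num
  refine ⟨(htail 1 le_rfl).trans_lt ENNReal.ofReal_lt_top, B + 1, by positivity,
    fun t₁ ht₁ => (htail t₁ ht₁).trans (ENNReal.ofReal_le_ofReal ?_)⟩
  exact mul_le_mul (by linarith) (Real.rpow_le_rpow_of_exponent_le ht₁ (by norm_num))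
    (Real.rpow_nonneg (zero_le_one.trans ht₁) _) (by linarith)

/-- `F ∈ L¹_t([1,∞); L²_x(ℝ³))`, with tail `∫_{t₁}^∞ ‖F(·,t)‖_{L²} dt ≤ C t₁^{−1/2}`. -/
theorem stmt18 (v : E3) (hv0 : 0 < ‖v‖) (hv1 : ‖v‖ < 1)
    (W₁ W₂ : E3 → ℝ) (hW₁m : Measurable W₁) (hW₂m : Measurable W₂) (C : ℝ)
    (hW₁ : ∀ x : E3, |W₁ x| ≤ C * (jb x)⁻¹) (hW₂ : ∀ x : E3, |W₂ x| ≤ C * (jb x)⁻¹) :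
    (∫⁻ t in Set.Ici (1 : ℝ),
        eLpNorm (fun x : E3 => Fterm v W₁ W₂ x t) 2 volume) < ⊤ ∧
    ∃ C' : ℝ, 0 < C' ∧ ∀ t₁ : ℝ, 1 ≤ t₁ →
      (∫⁻ t in Set.Ici t₁, eLpNorm (fun x : E3 => Fterm v W₁ W₂ x t) 2 volume)
        ≤ ENNReal.ofReal (C' * t₁ ^ (-(1 : ℝ) / 2)) :=
  stmt18_general v hv0 W₁ W₂ C hW₁ hW₂

end
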